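/- A function f : F_2^n → F_2^n is a modified planar function (i.e., for every nonzero a ∈ F_2^n the map x ↦ f(x+a) + f(x) + a⊙x is a bijection of F_2^n) if and only if for every nonzero c ∈ F_2^n the component function f_c(x) = c·f(x) is c-bent₄. -/

import Mathlib

open Finset

noncomputable section

/-- Dot product on `F_2^n`. -/
def dotp {n : ℕ} (x y : Fin n → ZMod 2) : ZMod 2 := ∑ i, x i * y i

/-- Coordinatewise product on `F_2^n`. -/
def odot {n : ℕ} (x y : Fin n → ZMod 2) : Fin n → ZMod 2 := fun i => x i * y i

/-- Hamming weight of `z ∈ F_2^n`. -/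
def wt {n : ℕ} (z : Fin n → ZMod 2) : ℕ := ∑ i, (z i).val

/-- The unitary transform `U_g^c(u) = Σ_x (−1)^{g(x)+u·x} · i^{wt(c⊙x)}`. -/
def U {n : ℕ} (g : (Fin n → ZMod 2) → ZMod 2) (c u : Fin n → ZMod 2) : ℂ :=
  ∑ x : Fin n → ZMod 2, (-1 : ℂ) ^ (g x + dotp u x).val * Complex.I ^ wt (odot c x)

/-- `g` is `c`-bent₄ if `U_g^c` has a flat spectrum. -/
def IsCBent4 {n : ℕ} (g : (Fin n → ZMod 2) → ZMod 2) (c : Fin n → ZMod 2) : Prop :=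
  ∀ u : Fin n → ZMod 2, ‖U g c u‖ = (2 : ℝ) ^ ((n : ℝ) / 2)

/-!
Write `χ t = (-1) ^ t`. Since
`i ^ wt (c ⊙ (x + a)) = i ^ wt (c ⊙ x) * i ^ wt (c ⊙ a) * χ (c · (a ⊙ x))`, expanding `|U_g^c(u)|²`
and substituting `y = x + a` gives the Wiener–Khinchin formula
`|U_g^c(u)|² = ∑_a χ (u · a) * conj (i ^ wt (c ⊙ a)) * C_g^c(a)` with the twisted autocorrelation
`C_g^c(a) = ∑_x χ (g (x + a) + g x + c · (a ⊙ x))`, and `C_g^c(0) = 2 ^ n`. By Fourier inversion,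
`g` is `c`-bent₄ iff `C_g^c(a) = 0` for all `a ≠ 0`. For `g = f_c` this sum is the character sum
of `D_a f(x) = f (x + a) + f x + a ⊙ x` at `c`, and a map `F_2^n → F_2^n` is bijective iff all its
character sums at `c ≠ 0` vanish.
-/

open Complex ComplexConjugate

section

variable {n : ℕ}

def signChar : AddChar (ZMod 2) ℂ := AddChar.zmodChar 2 (by norm_num : (-1 : ℂ) ^ 2 = 1)

local notation "χ" => signChar

lemma signChar_apply (t : ZMod 2) : χ t = (-1) ^ t.val := rfl

lemma signChar_one : χ 1 = -1 := by
  rw [signChar_apply, ZMod.val_one, pow_one]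

lemma conj_signChar (t : ZMod 2) : conj (χ t) = χ t := by
  simp [signChar_apply]

lemma signChar_sum {ι : Type*} (s : Finset ι) (g : ι → ZMod 2) :
    χ (∑ i ∈ s, g i) = ∏ i ∈ s, χ (g i) := by
  simpa only [AddChar.toMonoidHom_apply, toAdd_prod, toAdd_ofAdd] using
    map_prod signChar.toMonoidHom (fun i => Multiplicative.ofAdd (g i)) s

lemma dotp_comm (x y : Fin n → ZMod 2) : dotp x y = dotp y x := dotProduct_comm x y

lemma dotp_add (x y z : Fin n → ZMod 2) : dotp x (y + z) = dotp x y + dotp x z :=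
  dotProduct_add x y z

lemma zero_dotp (x : Fin n → ZMod 2) : dotp 0 x = 0 := zero_dotProduct x

lemma dotp_zero (x : Fin n → ZMod 2) : dotp x 0 = 0 := dotProduct_zero x

lemma odot_zero_left (x : Fin n → ZMod 2) : odot 0 x = 0 := by
  funext i; simp [odot]

lemma add_eq_zero_iff_eq_zmod_two (x y : Fin n → ZMod 2) : x + y = 0 ↔ x = y := by
  rw [add_eq_zero_iff_eq_neg, show -y = y from funext fun i => ZMod.neg_eq_self_mod_two (y i)]

lemma zmod_two_eq_zero_or_one (s : ZMod 2) : s = 0 ∨ s = 1 := by decide +revert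

lemma sum_zmod_two (F : ZMod 2 → ℂ) : ∑ t, F t = F 0 + F 1 := Fin.sum_univ_two F

lemma sum_signChar_mul (s : ZMod 2) : ∑ t : ZMod 2, χ (s * t) = if s = 0 then 2 else 0 := by
  rcases zmod_two_eq_zero_or_one s with rfl | rfl <;> simp [sum_zmod_two, signChar_one]

lemma sum_signChar_dotp (c : Fin n → ZMod 2) :
    ∑ x : Fin n → ZMod 2, χ (dotp c x) = if c = 0 then 2 ^ n else 0 := by
  simp only [dotp, signChar_sum]
  rw [← Fintype.prod_sum (fun i t => χ (c i * t))]
  simp only [sum_signChar_mul, Fintype.prod_ite_zero, funext_iff]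
  simp

lemma sum_signChar_dotp_right (c : Fin n → ZMod 2) :
    ∑ x : Fin n → ZMod 2, χ (dotp x c) = if c = 0 then 2 ^ n else 0 := by
  simp only [dotp_comm _ c, sum_signChar_dotp]

theorem bijective_iff_sum_signChar_dotp_eq_zero (D : (Fin n → ZMod 2) → Fin n → ZMod 2) :
    Function.Bijective D ↔ ∀ c ≠ 0, ∑ x, χ (dotp c (D x)) = 0 := by
  refine ⟨fun hD c hc => ?_, fun h => Function.Surjective.bijective_of_finite fun v => ?_⟩
  · rw [Fintype.sum_bijective D hD _ (fun y => χ (dotp c y)) fun _ => rfl, sum_signChar_dotp,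
      if_neg hc]
  -- `2 ^ n` times the number of solutions of `D x = v` is `∑ c, ∑ x, χ (c · (D x + v))`,
  -- and only `c = 0` contributes to it.
  by_contra! hv
  have hcount : ∑ c, ∑ x, χ (dotp c (D x + v)) = 2 ^ n := by
    rw [Finset.sum_eq_single 0 (fun c _ hc => ?_) (by simp)]
    · simp [zero_dotp]
    · simp only [dotp_add, AddChar.map_add_eq_mul, ← Finset.sum_mul, h c hc, zero_mul]
  have hzero : ∑ x, ∑ c, χ (dotp c (D x + v)) = 0 := by
    refine Finset.sum_eq_zero fun x _ => ?_
    rw [sum_signChar_dotp_right, if_neg ((add_eq_zero_iff_eq_zmod_two _ _).not.mpr (hv x))]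
  rw [Finset.sum_comm, hzero] at hcount
  exact two_ne_zero (pow_eq_zero_iff'.mp hcount.symm).1

lemma I_pow_val_mul_add (s x a : ZMod 2) :
    I ^ (s * (x + a)).val = I ^ (s * x).val * I ^ (s * a).val * χ (s * (a * x)) := by
  rcases zmod_two_eq_zero_or_one s with rfl | rfl <;>
    rcases zmod_two_eq_zero_or_one x with rfl | rfl <;>
    rcases zmod_two_eq_zero_or_one a with rfl | rfl <;>
    simp [signChar_one, ZMod.val_one, show (1 + 1 : ZMod 2) = 0 from rfl]

/-- Coordinatewise, `wt (c ⊙ (x + a)) = wt (c ⊙ x) + wt (c ⊙ a) - 2 wt (c ⊙ a ⊙ x)`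
and `i ^ (-2) = -1`. -/
lemma I_pow_wt_odot_add (c x a : Fin n → ZMod 2) :
    I ^ wt (odot c (x + a)) = I ^ wt (odot c x) * I ^ wt (odot c a) * χ (dotp c (odot a x)) := by
  simp only [wt, odot, dotp, ← Finset.prod_pow_eq_pow_sum, signChar_sum, ← Finset.prod_mul_distrib,
    Pi.add_apply, I_pow_val_mul_add]

lemma U_eq_sum_signChar (g : (Fin n → ZMod 2) → ZMod 2) (c u : Fin n → ZMod 2) :
    U g c u = ∑ x, χ (g x + dotp u x) * I ^ wt (odot c x) := rfl

def twistedAutocorrelation (g : (Fin n → ZMod 2) → ZMod 2) (c a : Fin n → ZMod 2) : ℂ :=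
  ∑ x, χ (g (x + a) + g x + dotp c (odot a x))

lemma twistedAutocorrelation_zero (g : (Fin n → ZMod 2) → ZMod 2) (c : Fin n → ZMod 2) :
    twistedAutocorrelation g c 0 = 2 ^ n := by
  simp [twistedAutocorrelation, odot_zero_left, dotp_zero, CharTwo.add_self_eq_zero]

lemma I_pow_mul_conj (k : ℕ) : I ^ k * conj (I ^ k) = 1 := by
  rw [map_pow, ← mul_pow, Complex.conj_I, mul_neg, I_mul_I, neg_neg, one_pow]

lemma summand_mul_conj_summand_add (g : (Fin n → ZMod 2) → ZMod 2) (c u x a : Fin n → ZMod 2) :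
    χ (g x + dotp u x) * I ^ wt (odot c x) *
        conj (χ (g (x + a) + dotp u (x + a)) * I ^ wt (odot c (x + a)))
      = χ (dotp u a) * conj (I ^ wt (odot c a)) * χ (g (x + a) + g x + dotp c (odot a x)) := by
  have hexp : g x + dotp u x + (g (x + a) + dotp u (x + a)) + dotp c (odot a x)
      = dotp u a + (g (x + a) + g x + dotp c (odot a x)) := by
    rw [dotp_add]; grind
  rw [I_pow_wt_odot_add, map_mul, map_mul, map_mul, conj_signChar, conj_signChar]
  calc _ = χ (g x + dotp u x) * χ (g (x + a) + dotp u (x + a)) * χ (dotp c (odot a x))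
          * (I ^ wt (odot c x) * conj (I ^ wt (odot c x))) * conj (I ^ wt (odot c a)) := by ring
    _ = _ := by
      rw [I_pow_mul_conj, ← AddChar.map_add_eq_mul, ← AddChar.map_add_eq_mul, hexp,
        AddChar.map_add_eq_mul]
      ring

theorem U_mul_conj_U (g : (Fin n → ZMod 2) → ZMod 2) (c u : Fin n → ZMod 2) :
    U g c u * conj (U g c u)
      = ∑ a, χ (dotp u a) * (conj (I ^ wt (odot c a)) * twistedAutocorrelation g c a) := by
  rw [U_eq_sum_signChar, map_sum, Finset.sum_mul_sum]
  calc _ = ∑ x, ∑ a, χ (g x + dotp u x) * I ^ wt (odot c x) *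
          conj (χ (g (x + a) + dotp u (x + a)) * I ^ wt (odot c (x + a))) :=
        Finset.sum_congr rfl fun x _ =>
          (Fintype.sum_equiv (Equiv.addLeft x) _ _ fun _ => rfl).symm
    _ = _ := by
      simp only [summand_mul_conj_summand_add]
      rw [Finset.sum_comm]
      simp only [twistedAutocorrelation, Finset.mul_sum, mul_assoc]

theorem sum_signChar_dotp_mul_eq_apply_zero_iff (w : (Fin n → ZMod 2) → ℂ) :
    (∀ u, ∑ a, χ (dotp u a) * w a = w 0) ↔ ∀ a ≠ 0, w a = 0 := by
  refine ⟨fun h b hb => ?_, fun h u => ?_⟩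
  · have hinv : ∑ u, χ (dotp u b) * ∑ a, χ (dotp u a) * w a = 2 ^ n * w b := by
      simp only [Finset.mul_sum, ← mul_assoc, ← AddChar.map_add_eq_mul, ← dotp_add]
      rw [Finset.sum_comm]
      simp only [← Finset.sum_mul, sum_signChar_dotp_right, add_eq_zero_iff_eq_zmod_two, ite_mul,
        zero_mul, Finset.sum_ite_eq, Finset.mem_univ, if_true]
    simp only [h, ← Finset.sum_mul, sum_signChar_dotp_right, if_neg hb, zero_mul] at hinv
    exact (mul_eq_zero.mp hinv.symm).resolve_left (pow_ne_zero n two_ne_zero)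
  · rw [Finset.sum_eq_single 0 (fun a _ ha => by rw [h a ha, mul_zero]) (by simp), dotp_zero,
      AddChar.map_zero_eq_one, one_mul]

lemma norm_eq_two_rpow_half_iff (z : ℂ) : ‖z‖ = 2 ^ ((n : ℝ) / 2) ↔ z * conj z = 2 ^ n := by
  have h : ((2 : ℝ) ^ ((n : ℝ) / 2)) ^ 2 = 2 ^ n := by
    rw [← Real.rpow_mul_natCast (by norm_num), Nat.cast_ofNat, div_mul_cancel₀ _ two_ne_zero,
      Real.rpow_natCast]
  rw [Complex.mul_conj', ← sq_eq_sq₀ (norm_nonneg z) (by positivity), h]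
  norm_cast

theorem isCBent4_iff_twistedAutocorrelation_eq_zero (g : (Fin n → ZMod 2) → ZMod 2)
    (c : Fin n → ZMod 2) : IsCBent4 g c ↔ ∀ a ≠ 0, twistedAutocorrelation g c a = 0 := by
  have hw0 : conj (I ^ wt (odot c 0)) * twistedAutocorrelation g c 0 = 2 ^ n := by
    simp [twistedAutocorrelation_zero, odot, wt]
  unfold IsCBent4
  simp_rw [norm_eq_two_rpow_half_iff, U_mul_conj_U, ← hw0]
  rw [sum_signChar_dotp_mul_eq_apply_zero_iff]
  simp [I_ne_zero]

lemma twistedAutocorrelation_dotp_comp (f : (Fin n → ZMod 2) → Fin n → ZMod 2)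
    (c a : Fin n → ZMod 2) :
    twistedAutocorrelation (fun x => dotp c (f x)) c a
      = ∑ x, χ (dotp c (f (x + a) + f x + odot a x)) := by
  simp only [twistedAutocorrelation, dotp_add]

end

/-- `f : F_2^n → F_2^n` is a modified planar function iff for every nonzero `c`
the component function `f_c(x) = c·f(x)` is `c`-bent₄. -/
theorem modifiedPlanar_iff_components_cBent4 {n : ℕ}
    (f : (Fin n → ZMod 2) → (Fin n → ZMod 2)) :
    (∀ a : Fin n → ZMod 2, a ≠ 0 →
        Function.Bijective (fun x => f (x + a) + f x + odot a x)) ↔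
    (∀ c : Fin n → ZMod 2, c ≠ 0 → IsCBent4 (fun x => dotp c (f x)) c) := by
  simp only [bijective_iff_sum_signChar_dotp_eq_zero, isCBent4_iff_twistedAutocorrelation_eq_zero,
    twistedAutocorrelation_dotp_comp]
  exact ⟨fun h c hc a ha => h a ha c hc, fun h a ha c hc => h c hc a ha⟩
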